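/- Let F be a Borel probability measure on [0,1], let Y have distribution F and let U be independent of Y with density 2u on (0,1), and set W = U·Y. Then P(W = 0) = F({0}), and for every bounded Borel measurable function h : [0,1] → ℝ, E[ h(W) · 1_{W>0} ] = ∫_0^1 h(w) · 2w F⁺(w) dw, where F⁺(w) = ∫_{(w,1]} y^{−2} F(dy); that is, on (0,1] the random variable W has density f_W(w) = 2w F⁺(w). -/

import Mathlib

open MeasureTheory Set

/-!
Conditionally on `Y = y > 0`, the product `W = U y` has density `2w / y²` on `(0, y)`, so the
pair `(Y, W)` has density `jointDensity y w = 1_{w < y ≤ 1} 2w / y²` with respect to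
`F ⊗ Lebesgue`. Integrating out `y` by Fubini gives the density `2w F⁺(w)` of `W` on `(0, 1)`;
Fubini applies because `∫ |h(w)| jointDensity y w dw ≤ 2 sup |h|` for every `y ∈ [0, 1]`.
The atom of `W` at `0` is that of `Y`, since `U > 0` almost surely.
-/

/-- `F⁺(w) = ∫_{(w,1]} y⁻² F(dy)`. -/
noncomputable def Fplus (F : Measure ℝ) (w : ℝ) : ℝ :=
  ∫ y in Set.Ioc w 1, (y ^ 2)⁻¹ ∂F

theorem setIntegral_Ioo_zero_one_comp_mul_right (f : ℝ → ℝ) {c : ℝ} (hc : 0 < c) :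
    ∫ u in Ioo 0 1, f (u * c) = c⁻¹ * ∫ w in Ioo 0 c, f w := by
  rw [← integral_Ioc_eq_integral_Ioo, ← integral_Ioc_eq_integral_Ioo,
    ← intervalIntegral.integral_of_le zero_le_one, ← intervalIntegral.integral_of_le hc.le,
    intervalIntegral.integral_comp_mul_right f hc.ne', zero_mul, one_mul, smul_eq_mul]

theorem setIntegral_Ioo_mul_comp_mul_right (g : ℝ → ℝ) {c : ℝ} (hc : 0 < c) :
    ∫ u in Ioo 0 1, 2 * u * g (u * c) = (c ^ 2)⁻¹ * ∫ w in Ioo 0 c, 2 * w * g w := by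
  have hscale (u : ℝ) : 2 * u * g (u * c) = c⁻¹ * (2 * (u * c) * g (u * c)) := by
    field_simp
  simp_rw [hscale, integral_const_mul,
    setIntegral_Ioo_zero_one_comp_mul_right (fun w => 2 * w * g w) hc, ← mul_assoc, sq, mul_inv]

noncomputable def jointDensity (y w : ℝ) : ℝ := (Ioc w 1).indicator (fun y => 2 * w / y ^ 2) y

theorem measurable_jointDensity : Measurable (Function.uncurry jointDensity) := by
  have hset : MeasurableSet {p : ℝ × ℝ | p.2 < p.1 ∧ p.1 ≤ 1} :=
    (measurableSet_lt measurable_snd measurable_fst).inter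
      (measurableSet_le measurable_fst measurable_const)
  exact (Measurable.indicator (by fun_prop) hset : Measurable
    ({p : ℝ × ℝ | p.2 < p.1 ∧ p.1 ≤ 1}.indicator fun p => 2 * p.2 / p.1 ^ 2))

theorem integral_jointDensity (F : Measure ℝ) (w : ℝ) :
    ∫ y, jointDensity y w ∂F = 2 * w * Fplus F w := by
  simp_rw [jointDensity, integral_indicator measurableSet_Ioc, div_eq_mul_inv,
    integral_const_mul, Fplus]

theorem jointDensity_eq_zero_of_le {y w : ℝ} (h : y ≤ w) : jointDensity y w = 0 :=
  indicator_of_notMem (fun hy => h.not_gt hy.1) _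

theorem jointDensity_of_lt {y w : ℝ} (hwy : w < y) (hy : y ≤ 1) :
    jointDensity y w = 2 * w / y ^ 2 :=
  indicator_of_mem (mem_Ioc.2 ⟨hwy, hy⟩) _

theorem jointDensity_nonneg {y w : ℝ} (hw : 0 ≤ w) : 0 ≤ jointDensity y w :=
  indicator_nonneg (fun _ _ => by positivity) _

theorem jointDensity_le {y w : ℝ} (hw : w ≤ 1) : jointDensity y w ≤ 2 / y ^ 2 := by
  refine indicator_le' (s := Ioc w 1) (g := fun y => 2 / y ^ 2) (fun y _ => ?_)
    (fun _ _ => by positivity) y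
  gcongr
  linarith

theorem setIntegral_jointDensity_mul (g : ℝ → ℝ) {y : ℝ} (hy : y ∈ Icc 0 1) :
    ∫ w in Ioo 0 1, jointDensity y w * g w
      = ∫ u in Ioo 0 1, 2 * u * (Ioi 0).indicator g (u * y) := by
  rcases hy.1.eq_or_lt with rfl | hy0
  · have hw (w : ℝ) (hw : w ∈ Ioo (0 : ℝ) 1) : jointDensity 0 w * g w = 0 := by
      rw [jointDensity_eq_zero_of_le hw.1.le, zero_mul]
    simp [setIntegral_congr_fun measurableSet_Ioo hw]
  have hleft : ∀ w ∈ Ioo (0 : ℝ) 1, jointDensity y w * g w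
      = (Iio y).indicator (fun w => (y ^ 2)⁻¹ * (2 * w * g w)) w := by
    intro w _
    rcases lt_or_ge w y with hwy | hyw
    · rw [jointDensity_of_lt hwy hy.2, indicator_of_mem (mem_Iio.2 hwy)]; ring
    · rw [jointDensity_eq_zero_of_le hyw, indicator_of_notMem (notMem_Iio.2 hyw), zero_mul]
  have hright : ∀ u ∈ Ioo (0 : ℝ) 1, 2 * u * (Ioi 0).indicator g (u * y) = 2 * u * g (u * y) :=
    fun u hu => by rw [indicator_of_mem (mem_Ioi.2 (mul_pos hu.1 hy0))]
  rw [setIntegral_congr_fun measurableSet_Ioo hleft, setIntegral_congr_fun measurableSet_Ioo hright,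
    setIntegral_indicator measurableSet_Iio, Ioo_inter_Iio, min_eq_right hy.2, integral_const_mul,
    setIntegral_Ioo_mul_comp_mul_right g hy0]

theorem norm_setIntegral_Ioo_mul_indicator_le {g : ℝ → ℝ} {C : ℝ} (hC : ∀ x, |g x| ≤ C) (y : ℝ) :
    ‖∫ u in Ioo 0 1, 2 * u * (Ioi 0).indicator g (u * y)‖ ≤ 2 * C := by
  have hbound : ∀ u ∈ Ioo (0 : ℝ) 1, ‖2 * u * (Ioi 0).indicator g (u * y)‖ ≤ 2 * C := by
    intro u hu
    rw [norm_mul]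
    gcongr
    · rw [Real.norm_of_nonneg (by linarith [hu.1])]
      linarith [hu.2]
    · exact le_trans (norm_indicator_le_norm_self _ _) (hC _)
  simpa using norm_setIntegral_le_of_norm_le_const (μ := volume) measure_Ioo_lt_top hbound

theorem integrable_jointDensity_mul {F : Measure ℝ} [IsFiniteMeasure F]
    (hF : ∀ᵐ y ∂F, y ∈ Icc 0 1) {g : ℝ → ℝ} (hg : Measurable g) {C : ℝ} (hC : ∀ x, |g x| ≤ C) :
    Integrable (Function.uncurry fun y w => jointDensity y w * g w)
      (F.prod (volume.restrict (Ioo 0 1))) := by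
  have hmeas : Measurable (Function.uncurry fun y w => jointDensity y w * g w) :=
    measurable_jointDensity.mul (hg.comp measurable_snd)
  refine (integrable_prod_iff hmeas.aestronglyMeasurable).2 ⟨.of_forall fun y => ?_, ?_⟩
  · refine .of_bound (hmeas.comp measurable_prodMk_left).aestronglyMeasurable (2 / y ^ 2 * C) ?_
    filter_upwards [ae_restrict_mem measurableSet_Ioo] with w hw
    rw [Function.uncurry_apply_pair, norm_mul, Real.norm_of_nonneg (jointDensity_nonneg hw.1.le)]
    exact mul_le_mul (jointDensity_le hw.2.le) (hC w) (norm_nonneg _) (by positivity)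
  refine .of_bound hmeas.norm.aestronglyMeasurable.integral_prod_right' (2 * C) ?_
  filter_upwards [hF] with y hy
  have hnorm : ∀ w ∈ Ioo (0 : ℝ) 1, ‖jointDensity y w * g w‖ = jointDensity y w * |g w| :=
    fun w hw => by rw [norm_mul, Real.norm_of_nonneg (jointDensity_nonneg hw.1.le), Real.norm_eq_abs]
  simp only [Function.uncurry_apply_pair]
  rw [setIntegral_congr_fun measurableSet_Ioo hnorm,
    setIntegral_jointDensity_mul (fun x => |g x|) hy]
  exact norm_setIntegral_Ioo_mul_indicator_le (fun x => (abs_abs (g x)).le.trans (hC x)) y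

theorem integral_setIntegral_mul_indicator_comp_mul {F : Measure ℝ} [IsFiniteMeasure F]
    (hF : ∀ᵐ y ∂F, y ∈ Icc 0 1) {g : ℝ → ℝ} (hg : Measurable g) {C : ℝ} (hC : ∀ x, |g x| ≤ C) :
    ∫ y, (∫ u in Ioo 0 1, 2 * u * (Ioi 0).indicator g (u * y)) ∂F
      = ∫ w in Ioo 0 1, g w * (2 * w * Fplus F w) := by
  calc ∫ y, (∫ u in Ioo 0 1, 2 * u * (Ioi 0).indicator g (u * y)) ∂F
      = ∫ y, (∫ w in Ioo 0 1, jointDensity y w * g w) ∂F :=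
        integral_congr_ae (hF.mono fun y hy => (setIntegral_jointDensity_mul g hy).symm)
    _ = ∫ w in Ioo 0 1, ∫ y, jointDensity y w * g w ∂F :=
        integral_integral_swap (integrable_jointDensity_mul hF hg hC)
    _ = ∫ w in Ioo 0 1, g w * (2 * w * Fplus F w) := by
        simp_rw [integral_mul_const, integral_jointDensity, mul_comm]

theorem ProbabilityTheory.IndepFun.integral_comp_eq_integral_integral {Ω α β E : Type*}
    [MeasurableSpace Ω] [MeasurableSpace α] [MeasurableSpace β]
    [NormedAddCommGroup E] [NormedSpace ℝ E]
    {μ : Measure Ω} [IsFiniteMeasure μ] {X : Ω → α} {Y : Ω → β}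
    (hXY : ProbabilityTheory.IndepFun X Y μ) (hX : Measurable X) (hY : Measurable Y)
    {G : α × β → E} (hG : Integrable G ((μ.map X).prod (μ.map Y))) :
    ∫ ω, G (X ω, Y ω) ∂μ = ∫ x, (∫ y, G (x, y) ∂(μ.map Y)) ∂(μ.map X) := by
  have hlaw := (indepFun_iff_map_prod_eq_prod_map_map hX.aemeasurable hY.aemeasurable).1 hXY
  rw [← integral_prod G hG, ← hlaw,
    integral_map (hX.prodMk hY).aemeasurable (hlaw ▸ hG.aestronglyMeasurable)]

theorem integral_withDensity_two_mul (f : ℝ → ℝ) :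
    ∫ u, f u ∂(volume.restrict (Ioo (0 : ℝ) 1)).withDensity (fun u => ENNReal.ofReal (2 * u))
      = ∫ u in Ioo 0 1, 2 * u * f u := by
  rw [integral_withDensity_eq_integral_toReal_smul (by fun_prop)
    (.of_forall fun _ => ENNReal.ofReal_lt_top)]
  refine setIntegral_congr_fun measurableSet_Ioo fun u hu => ?_
  rw [ENNReal.toReal_ofReal (by linarith [hu.1]), smul_eq_mul]

theorem ae_mem_of_map_eq_withDensity {Ω α : Type*} [MeasurableSpace Ω] [MeasurableSpace α]
    {μ : Measure Ω} {ν : Measure α} {U : Ω → α} (hU : Measurable U) {s : Set α}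
    (hs : MeasurableSet s) {f : α → ENNReal} (hUlaw : μ.map U = (ν.restrict s).withDensity f) :
    ∀ᵐ ω ∂μ, U ω ∈ s :=
  ae_of_ae_map hU.aemeasurable <| hUlaw ▸
    (withDensity_absolutelyContinuous _ _).ae_le (ae_restrict_mem hs)

theorem stmt2 {Ω : Type*} [MeasurableSpace Ω] (ℙ : Measure Ω) [IsProbabilityMeasure ℙ]
    (F : Measure ℝ) [IsProbabilityMeasure F] (hF : F (Set.Icc (0:ℝ) 1)ᶜ = 0)
    (Y U : Ω → ℝ) (hY : Measurable Y) (hU : Measurable U)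
    (hInd : ProbabilityTheory.IndepFun Y U ℙ)
    (hYlaw : Measure.map Y ℙ = F)
    (hUlaw : Measure.map U ℙ =
      (volume.restrict (Set.Ioo (0:ℝ) 1)).withDensity (fun u => ENNReal.ofReal (2 * u))) :
    ℙ {ω | U ω * Y ω = 0} = F {0} ∧
    ∀ h : ℝ → ℝ, Measurable h → (∃ C, ∀ x, |h x| ≤ C) →
      (∫ ω, Set.indicator {ω' | 0 < U ω' * Y ω'} (fun ω' => h (U ω' * Y ω')) ω ∂ℙ)
        = ∫ w in Set.Ioo (0:ℝ) 1, h w * (2 * w * Fplus F w) := by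
  have hUmem : ∀ᵐ ω ∂ℙ, U ω ∈ Ioo 0 1 := ae_mem_of_map_eq_withDensity hU measurableSet_Ioo hUlaw
  refine ⟨?_, ?_⟩
  · calc ℙ {ω | U ω * Y ω = 0} = ℙ (Y ⁻¹' {0}) := by
          refine measure_congr (Filter.eventuallyEq_set.2 (hUmem.mono fun ω hω => ?_))
          simp [hω.1.ne']
      _ = F {0} := by rw [← Measure.map_apply hY (measurableSet_singleton 0), hYlaw]
  rintro h hh ⟨C, hC⟩
  have hG : Integrable (fun p : ℝ × ℝ => (Ioi 0).indicator h (p.2 * p.1)) (F.prod (ℙ.map U)) :=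
    .of_bound ((hh.indicator measurableSet_Ioi).comp (by fun_prop)).aestronglyMeasurable C
      (.of_forall fun p => le_trans (norm_indicator_le_norm_self _ _) (hC _))
  calc ∫ ω, {ω' | 0 < U ω' * Y ω'}.indicator (fun ω' => h (U ω' * Y ω')) ω ∂ℙ
      = ∫ ω, (Ioi 0).indicator h (U ω * Y ω) ∂ℙ := rfl
    _ = ∫ y, (∫ u, (Ioi 0).indicator h (u * y) ∂(ℙ.map U)) ∂(ℙ.map Y) :=
        hInd.integral_comp_eq_integral_integral (G := fun p => (Ioi 0).indicator h (p.2 * p.1))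
          hY hU (hYlaw ▸ hG)
    _ = ∫ y, (∫ u in Ioo 0 1, 2 * u * (Ioi 0).indicator h (u * y)) ∂F := by
        simp_rw [hYlaw, hUlaw, integral_withDensity_two_mul]
    _ = ∫ w in Ioo 0 1, h w * (2 * w * Fplus F w) :=
        integral_setIntegral_mul_indicator_comp_mul (mem_ae_iff.2 hF) hh hC
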